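/- Fix integers r ≥ 3, t ≥ 2, and for integers m ≥ k ≥ 0 let 𝓖(m,k) be the family of all k-element subsets F of [m] such that there exists an integer j ≥ 0 with |F ∩ [t + r·j]| ≥ t + (r−1)·j. Then for every k ≥ 1, |𝓖(2k,k)| / C(2k,k) ≤ |𝓖(2k+2,k+1)| / C(2k+2,k+1). -/

import Mathlib

/-!
Sort the sets `F` by the first index `j` at which they hit, i.e. at which
`|F ∩ [t + r j]| ≥ A := t + (r - 1) j`. At the first hit this count is exactly `A`, and whether
`F` first hits at `j` depends only on `F ∩ [t + r j]`; so the `k`-subsets of `[m]` first hitting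
at `j` number `P_j · C(m - (A + j), k - A)`, where `P_j` does not depend on `m` or `k`. It
therefore suffices that `C(2k - A - j, k - A) / C(2k, k)` does not decrease from `k` to `k + 1`,
an inequality between polynomials once `A ≥ 2j + 2`, which is where `r ≥ 3` and `t ≥ 2` enter.
-/

/-- `hitFamily m k r t` is the family of all `k`-element subsets `F` of `[m]` such that
there exists `j ≥ 0` with `|F ∩ [t + r·j]| ≥ t + (r−1)·j`; in lattice-path terms,
it corresponds to the lattice paths from `(0,0)` to `(m−k,k)` hitting `y = (r−1)x + t`. -/
noncomputable def hitFamily (m k r t : ℕ) : Finset (Finset ℕ) := by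
  classical
  exact (Finset.powersetCard k (Finset.Icc 1 m)).filter
    (fun F => ∃ j : ℕ, t + (r - 1) * j ≤ (F ∩ Finset.Icc 1 (t + r * j)).card)

open Finset

theorem Finset.card_filter_inter_mem_powersetCard {α : Type*} [DecidableEq α]
    {s u : Finset α} {P : Finset (Finset α)} {a k : ℕ}
    (hus : u ⊆ s) (hP : P ⊆ powersetCard a u) (hak : a ≤ k) :
    #{F ∈ powersetCard k s | F ∩ u ∈ P} = #P * (#(s \ u)).choose (k - a) := by
  have hPu : ∀ G ∈ P, G ⊆ u ∧ #G = a := fun G hG => mem_powersetCard.1 (hP hG)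
  rw [← card_powersetCard, ← card_product]
  refine card_nbij' (fun F => (F ∩ u, F \ u)) (fun p => p.1 ∪ p.2) ?_ ?_ ?_ ?_
  · intro F hF
    simp only [coe_filter, mem_powersetCard, Set.mem_ofPred_eq] at hF
    obtain ⟨⟨hFs, hFk⟩, hFP⟩ := hF
    have hsplit := card_inter_add_card_sdiff F u
    have hFu := (hPu _ hFP).2
    simp only [coe_product, Set.mem_prod, mem_coe, mem_powersetCard]
    exact ⟨hFP, sdiff_subset_sdiff hFs le_rfl, by omega⟩
  · rintro ⟨G, H⟩ hGH
    simp only [coe_product, Set.mem_prod, mem_coe, mem_powersetCard] at hGH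
    obtain ⟨hGP, hHs, hHk⟩ := hGH
    obtain ⟨hGu, hGa⟩ := hPu G hGP
    have hHu : Disjoint H u := (subset_sdiff.1 hHs).2
    simp only [coe_filter, mem_powersetCard, Set.mem_ofPred_eq]
    refine ⟨⟨union_subset (hGu.trans hus) (hHs.trans sdiff_subset), ?_⟩, ?_⟩
    · rw [card_union_of_disjoint (disjoint_of_subset_left hGu hHu.symm), hGa, hHk]; omega
    · rwa [union_inter_distrib_right, inter_eq_left.2 hGu, disjoint_iff_inter_eq_empty.1 hHu,
        union_empty]
  · intro F _
    exact sup_inf_sdiff F u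
  · rintro ⟨G, H⟩ hGH
    simp only [coe_product, Set.mem_prod, mem_coe, mem_powersetCard] at hGH
    have hGu := (hPu G hGH.1).1
    have hHu : Disjoint H u := (subset_sdiff.1 hGH.2.1).2
    simp only [Prod.mk.injEq]
    rw [union_inter_distrib_right, inter_eq_left.2 hGu, disjoint_iff_inter_eq_empty.1 hHu,
      union_empty, union_sdiff_distrib, sdiff_eq_empty_iff_subset.2 hGu, hHu.sdiff_eq_left,
      empty_union]
    exact ⟨rfl, rfl⟩

theorem Nat.choose_add_two_add_one_mul (n a : ℕ) :
    (n + 2).choose (a + 1) * ((a + 1) * (n + 1 - a)) = n.choose a * ((n + 1) * (n + 2)) := by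
  have h₁ := Nat.add_one_mul_choose_eq (n + 1) a
  have h₂ := Nat.choose_succ_right_eq (n + 1) a
  have h₃ := Nat.add_one_mul_choose_eq n a
  calc (n + 2).choose (a + 1) * ((a + 1) * (n + 1 - a))
      = (n + 2) * ((n + 1).choose a * (n + 1 - a)) := by rw [← mul_assoc, ← h₁]; ring
    _ = (n + 2) * ((n + 1) * n.choose a) := by rw [← h₂, ← h₃]
    _ = n.choose a * ((n + 1) * (n + 2)) := by ring

theorem choose_sub_mul_choose_le {A B k : ℕ} (hBA : 2 * B + 2 ≤ A) (hAk : A ≤ k) :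
    (2 * k - (A + B)).choose (k - A) * (2 * k + 2).choose (k + 1) ≤
      (2 * k + 2 - (A + B)).choose (k + 1 - A) * (2 * k).choose k := by
  obtain ⟨d, rfl⟩ : ∃ d, A = 2 * B + 2 + d := ⟨A - (2 * B + 2), by omega⟩
  obtain ⟨a, rfl⟩ : ∃ a, k = 2 * B + 2 + d + a := ⟨k - (2 * B + 2 + d), by omega⟩
  set k := 2 * B + 2 + d + a with hk
  set n := B + d + 2 * a + 2 with hn
  rw [show 2 * k - (2 * B + 2 + d + B) = n by omega, show k - (2 * B + 2 + d) = a by omega,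
    show 2 * k + 2 - (2 * B + 2 + d + B) = n + 2 by omega,
    show k + 1 - (2 * B + 2 + d) = a + 1 by omega]
  have hpath := Nat.choose_add_two_add_one_mul n a
  rw [show n + 1 - a = B + d + a + 3 by omega] at hpath
  have hcentral : (k + 1) * (2 * k + 2).choose (k + 1) = 2 * (2 * k + 1) * (2 * k).choose k := by
    simpa [Nat.centralBinom_eq_two_mul_choose, mul_add] using Nat.succ_mul_centralBinom_succ k
  have hpoly : 2 * (2 * k + 1) * ((a + 1) * (B + d + a + 3)) ≤ (n + 1) * (n + 2) * (k + 1) := by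
    rw [hn, hk]
    nlinarith [sq_nonneg B, sq_nonneg d, sq_nonneg a, mul_nonneg (Nat.zero_le B) (Nat.zero_le d)]
  refine Nat.le_of_mul_le_mul_right (c := (k + 1) * ((a + 1) * (B + d + a + 3))) ?_
    (by positivity)
  calc n.choose a * (2 * k + 2).choose (k + 1) * ((k + 1) * ((a + 1) * (B + d + a + 3)))
      = n.choose a * ((k + 1) * (2 * k + 2).choose (k + 1)) * ((a + 1) * (B + d + a + 3)) := by
        ring
    _ = n.choose a * (2 * k).choose k * (2 * (2 * k + 1) * ((a + 1) * (B + d + a + 3))) := by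
        rw [hcentral]; ring
    _ ≤ n.choose a * (2 * k).choose k * ((n + 1) * (n + 2) * (k + 1)) := by gcongr
    _ = (n + 2).choose (a + 1) * ((a + 1) * (B + d + a + 3)) * (2 * k).choose k * (k + 1) := by
        rw [hpath]; ring
    _ = (n + 2).choose (a + 1) * (2 * k).choose k * ((k + 1) * ((a + 1) * (B + d + a + 3))) := by
        ring

theorem Finset.card_inter_Icc_add_le (F : Finset ℕ) (a b : ℕ) :
    #(F ∩ Icc 1 (a + b)) ≤ #(F ∩ Icc 1 a) + b := by
  calc #(F ∩ Icc 1 (a + b)) ≤ #(F ∩ Icc 1 a ∪ Icc (a + 1) (a + b)) := by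
        refine card_le_card fun x hx => ?_
        simp only [mem_union, mem_inter, mem_Icc] at hx ⊢
        rcases le_or_gt x a with h | h
        · exact .inl ⟨hx.1, hx.2.1, h⟩
        · exact .inr ⟨h, hx.2.2⟩
    _ ≤ #(F ∩ Icc 1 a) + b := by
        refine (card_union_le _ _).trans ?_
        rw [Nat.card_Icc]
        omega

section FirstHit

variable {m k r t i j : ℕ} {F : Finset ℕ}

def HitsAt (r t j : ℕ) (F : Finset ℕ) : Prop :=
  t + (r - 1) * j ≤ #(F ∩ Icc 1 (t + r * j))

instance (r t j : ℕ) : DecidablePred (HitsAt r t j) :=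
  fun _ => inferInstanceAs (Decidable (_ ≤ _))

def firstHitPatterns (r t j : ℕ) : Finset (Finset ℕ) :=
  {G ∈ powersetCard (t + (r - 1) * j) (Icc 1 (t + r * j)) | ∀ i < j, ¬ HitsAt r t i G}

def firstHitFamily (m k r t j : ℕ) : Finset (Finset ℕ) :=
  {F ∈ powersetCard k (Icc 1 m) | HitsAt r t j F ∧ ∀ i < j, ¬ HitsAt r t i F}

theorem mem_hitFamily :
    F ∈ hitFamily m k r t ↔ F ∈ powersetCard k (Icc 1 m) ∧ ∃ j, HitsAt r t j F := by
  simp only [hitFamily, mem_filter, HitsAt]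

theorem HitsAt.le_card (h : HitsAt r t j F) : t + (r - 1) * j ≤ #F :=
  h.trans (card_le_card inter_subset_left)

theorem hitsAt_inter_Icc_iff (hij : i ≤ j) :
    HitsAt r t i (F ∩ Icc 1 (t + r * j)) ↔ HitsAt r t i F := by
  have hle : t + r * i ≤ t + r * j := by gcongr
  rw [HitsAt, HitsAt, inter_assoc, inter_eq_right.2 (Icc_subset_Icc_right hle)]

theorem card_inter_Icc_eq_of_firstHit (hj : HitsAt r t j F) (hmin : ∀ i < j, ¬ HitsAt r t i F) :
    #(F ∩ Icc 1 (t + r * j)) = t + (r - 1) * j := by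
  refine le_antisymm ?_ hj
  cases j with
  | zero => simpa using card_le_card (inter_subset_right (s₁ := F) (s₂ := Icc 1 t))
  | succ i =>
    -- the next `r` positions add at most `r`, so a surplus at `i + 1` would be a hit at `i`
    have hstep := card_inter_Icc_add_le F (t + r * i) r
    have hi := hmin i i.lt_succ_self
    rw [HitsAt] at hi
    rw [show t + r * (i + 1) = t + r * i + r by ring, mul_add, mul_one]
    omega

theorem firstHitFamily_eq_filter :
    firstHitFamily m k r t j =
      {F ∈ powersetCard k (Icc 1 m) | F ∩ Icc 1 (t + r * j) ∈ firstHitPatterns r t j} := by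
  refine filter_congr fun F _ => ?_
  simp only [firstHitPatterns, mem_filter, mem_powersetCard, inter_subset_right, true_and]
  constructor
  · rintro ⟨hj, hmin⟩
    exact ⟨card_inter_Icc_eq_of_firstHit hj hmin,
      fun i hi => (hitsAt_inter_Icc_iff hi.le).not.2 (hmin i hi)⟩
  · rintro ⟨hcard, hmin⟩
    exact ⟨hcard.ge, fun i hi => (hitsAt_inter_Icc_iff hi.le).not.1 (hmin i hi)⟩

theorem card_firstHitFamily (hA : t + (r - 1) * j ≤ k) (hL : t + r * j ≤ m) :
    #(firstHitFamily m k r t j) =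
      #(firstHitPatterns r t j) * (m - (t + r * j)).choose (k - (t + (r - 1) * j)) := by
  rw [firstHitFamily_eq_filter, card_filter_inter_mem_powersetCard (P := firstHitPatterns r t j)
    (Icc_subset_Icc_right hL) (filter_subset _ _) hA,
    card_sdiff_of_subset (Icc_subset_Icc_right hL)]
  simp

theorem firstHitFamily_eq_empty (hk : k < t + (r - 1) * j) : firstHitFamily m k r t j = ∅ :=
  filter_eq_empty_iff.2 fun _ hF h =>
    hk.not_ge ((mem_powersetCard.1 hF).2 ▸ h.1.le_card)

theorem card_hitFamily_eq_sum (hr : 2 ≤ r) {n : ℕ} (hkn : k < n) :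
    #(hitFamily m k r t) = ∑ j ∈ range n, #(firstHitFamily m k r t j) := by
  have hU : hitFamily m k r t = (range n).biUnion (firstHitFamily m k r t) := by
    ext F
    simp only [mem_hitFamily, firstHitFamily, mem_biUnion, mem_range, mem_filter]
    constructor
    · rintro ⟨hF, hhit⟩
      refine ⟨Nat.find hhit, ?_, hF, Nat.find_spec hhit, fun i hi => Nat.find_min hhit hi⟩
      have := (Nat.find_spec hhit).le_card
      have : Nat.find hhit ≤ (r - 1) * Nat.find hhit := Nat.le_mul_of_pos_left _ (by omega)
      rw [(mem_powersetCard.1 hF).2] at *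
      omega
    · rintro ⟨j, -, hF, hj, -⟩
      exact ⟨hF, j, hj⟩
  rw [hU, card_biUnion]
  intro i _ j _ hij
  refine disjoint_filter.2 fun F _ hi hj => ?_
  rcases hij.lt_or_gt with h | h
  · exact hj.2 i h hi.1
  · exact hi.2 j h hj.1

theorem card_firstHitFamily_mul_choose_le (hr : 3 ≤ r) (ht : 2 ≤ t) (k j : ℕ) :
    #(firstHitFamily (2 * k) k r t j) * (2 * k + 2).choose (k + 1) ≤
      #(firstHitFamily (2 * k + 2) (k + 1) r t j) * (2 * k).choose k := by
  by_cases hA : t + (r - 1) * j ≤ k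
  · have hrj : r * j = (r - 1) * j + j := by
      rw [← Nat.succ_mul, Nat.succ_eq_add_one, Nat.sub_add_cancel (by omega)]
    have hjA : 2 * j + 2 ≤ t + (r - 1) * j := by
      have : 2 * j ≤ (r - 1) * j := Nat.mul_le_mul_right j (by omega)
      omega
    rw [card_firstHitFamily hA (by omega), card_firstHitFamily (by omega) (by omega),
      mul_assoc, mul_assoc, hrj, ← add_assoc]
    exact Nat.mul_le_mul_left _ (choose_sub_mul_choose_le hjA hA)
  · rw [firstHitFamily_eq_empty (by omega), card_empty, zero_mul]
    exact Nat.zero_le _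

theorem card_hitFamily_mul_choose_le (hr : 3 ≤ r) (ht : 2 ≤ t) (k : ℕ) :
    #(hitFamily (2 * k) k r t) * (2 * k + 2).choose (k + 1) ≤
      #(hitFamily (2 * k + 2) (k + 1) r t) * (2 * k).choose k := by
  rw [card_hitFamily_eq_sum (n := k + 2) (by omega) (by omega),
    card_hitFamily_eq_sum (n := k + 2) (by omega) (by omega), sum_mul, sum_mul]
  exact sum_le_sum fun j _ => card_firstHitFamily_mul_choose_le hr ht k j

end FirstHit

theorem hitFamily_ratio_mono_half
    (r t : ℕ) (hr : 3 ≤ r) (ht : 2 ≤ t) :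
    ∀ k : ℕ, 1 ≤ k →
      ((hitFamily (2 * k) k r t).card : ℝ) / (Nat.choose (2 * k) k) ≤
        ((hitFamily (2 * k + 2) (k + 1) r t).card : ℝ) / (Nat.choose (2 * k + 2) (k + 1)) := by
  intro k _
  rw [div_le_div_iff₀ (by exact_mod_cast Nat.choose_pos (by omega))
    (by exact_mod_cast Nat.choose_pos (by omega))]
  exact_mod_cast card_hitFamily_mul_choose_le hr ht k
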